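/- arXiv:math/0405342 — 3 statements merged into one kernel-verified Lean document; each statement's English description precedes it below -/
import Mathlib

section
/- For every real u with −1 ≤ u ≤ 1 and every real v ≥ 0, one has u·v ≤ u²·1{u > 0} + ψ₁(v), where 1{u > 0} equals 1 if u > 0 and 0 otherwise. -/
noncomputable def psiOne (v : ℝ) : ℝ := if v ≤ 2 then v ^ 2 / 4 else v - 1

theorem psiOne_nonneg (v : ℝ) : 0 ≤ psiOne v := by
  unfold psiOne
  split_ifs with hv
  · positivity
  · linarith

/-- For `v ≤ 2` this is AM-GM; for `v > 2` the difference factors as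
`u² + (v - 1) - u v = (1 - u) (v - 1 - u)`. -/
theorem mul_le_sq_add_psiOne {u : ℝ} (hu : u ≤ 1) (v : ℝ) : u * v ≤ u ^ 2 + psiOne v := by
  unfold psiOne
  split_ifs with hv
  · nlinarith [sq_nonneg (u - v / 2)]
  · nlinarith [mul_nonneg (sub_nonneg.2 hu) (by linarith : (0 : ℝ) ≤ v - 1 - u)]

theorem stmt6_general (u v : ℝ) (hu2 : u ≤ 1) (hv : 0 ≤ v) :
    u * v ≤ u ^ 2 * (if 0 < u then (1:ℝ) else 0) + psiOne v := by
  split_ifs with hu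
  · simpa using mul_le_sq_add_psiOne hu2 v
  · calc u * v ≤ 0 := mul_nonpos_of_nonpos_of_nonneg (not_lt.1 hu) hv
      _ ≤ u ^ 2 * 0 + psiOne v := by simpa using psiOne_nonneg v

/-- inequality (7) of the paper. For every `u ∈ [−1,1]` and `v ≥ 0`,
`u·v ≤ u²·1{u > 0} + ψ₁(v)`. -/
theorem stmt6 (u v : ℝ) (hu1 : -1 ≤ u) (hu2 : u ≤ 1) (hv : 0 ≤ v) :
    u * v ≤ u ^ 2 * (if 0 < u then (1:ℝ) else 0) + psiOne v :=
  stmt6_general u v hu2 hv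
end

section
/- Let (Ω, P) be a probability space and f : Ω → [0,1] measurable. Define h(c) = ∫ (f(y) − c)² 1{f(y) > c} dP(y) for c ∈ [0,1]. Then h is nonincreasing and convex on [0,1], h(0) = P f² and h(1) = 0, and consequently for any c₁, …, c_n ∈ [0,1], (1/n) Σ_{i=1}^n h(c_i) ≤ (1 − c̄) P f², where c̄ = (1/n) Σ_{i=1}^n c_i. -/
/-!
For each `x`, the map `c ↦ (x - c)₊²` is antitone and convex, and both properties survive
integration against `P`. A convex function on `[0, 1]` lies below its chord, so with
`h 0 = P f²` and `h 1 = 0` we get `h c ≤ (1 - c) P f²`; averaging over the `c i` gives the bound.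
-/

open MeasureTheory Set

lemma ite_lt_sub_sq_eq_max_sq (c x : ℝ) :
    (if c < x then (x - c) ^ 2 else 0) = max (x - c) 0 ^ 2 := by
  split_ifs with h
  · rw [max_eq_left (sub_nonneg.mpr h.le)]
  · rw [max_eq_right (sub_nonpos.mpr (not_lt.mp h))]
    simp

lemma antitone_ite_lt_sub_sq (x : ℝ) :
    Antitone fun c : ℝ => if c < x then (x - c) ^ 2 else 0 := by
  intro a b hab
  simp only [ite_lt_sub_sq_eq_max_sq]
  gcongr

lemma convexOn_ite_lt_sub_sq (x : ℝ) :
    ConvexOn ℝ univ fun c : ℝ => if c < x then (x - c) ^ 2 else 0 := by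
  simp only [ite_lt_sub_sq_eq_max_sq]
  have hpos : ConvexOn ℝ univ fun c : ℝ => max (x - c) 0 :=
    ((convexOn_const x convex_univ).sub (concaveOn_id convex_univ)).sup
      (convexOn_const 0 convex_univ)
  exact hpos.pow (fun c _ => le_max_right _ _) 2

lemma ite_lt_sub_sq_le {c x : ℝ} (hx : x ≤ 1) :
    (if c < x then (x - c) ^ 2 else 0) ≤ max (1 - c) 0 ^ 2 := by
  rw [ite_lt_sub_sq_eq_max_sq]
  gcongr

lemma integrable_ite_lt_sub_sq {Ω : Type*} [MeasurableSpace Ω] {μ : Measure Ω}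
    [IsFiniteMeasure μ] {f : Ω → ℝ} (hf : Measurable f) (hf1 : ∀ ω, f ω ≤ 1) (c : ℝ) :
    Integrable (fun ω => if c < f ω then (f ω - c) ^ 2 else 0) μ := by
  refine Integrable.of_bound (Measurable.ite (measurableSet_lt measurable_const hf)
    ((hf.sub measurable_const).pow_const 2) measurable_const).aestronglyMeasurable
    (max (1 - c) 0 ^ 2) (ae_of_all _ fun ω => ?_)
  rw [Real.norm_eq_abs, ite_lt_sub_sq_eq_max_sq, abs_of_nonneg (by positivity),
    ← ite_lt_sub_sq_eq_max_sq]
  exact ite_lt_sub_sq_le (hf1 ω)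

lemma ConvexOn.apply_le_one_sub_mul_add_mul {g : ℝ → ℝ} (hg : ConvexOn ℝ (Icc 0 1) g) {c : ℝ}
    (hc : c ∈ Icc (0 : ℝ) 1) : g c ≤ (1 - c) * g 0 + c * g 1 := by
  have := hg.2 (left_mem_Icc.mpr zero_le_one) (right_mem_Icc.mpr zero_le_one)
    (sub_nonneg.mpr hc.2) hc.1 (sub_add_cancel 1 c)
  simpa using this

lemma mean_le_one_sub_mean_mul {ι : Type*} [Fintype ι] [Nonempty ι] {h c : ι → ℝ} {A : ℝ}
    (hle : ∀ i, h i ≤ (1 - c i) * A) :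
    1 / (Fintype.card ι : ℝ) * ∑ i, h i ≤ (1 - 1 / (Fintype.card ι : ℝ) * ∑ i, c i) * A := by
  have hcard : (0 : ℝ) < Fintype.card ι := Nat.cast_pos.mpr Fintype.card_pos
  calc 1 / (Fintype.card ι : ℝ) * ∑ i, h i
      ≤ 1 / (Fintype.card ι : ℝ) * ∑ i, (1 - c i) * A := by
        gcongr with i
        exact hle i
    _ = (1 - 1 / (Fintype.card ι : ℝ) * ∑ i, c i) * A := by
        rw [← Finset.sum_mul, Finset.sum_sub_distrib]
        simp only [Finset.sum_const, Finset.card_univ, nsmul_eq_mul, mul_one]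
        field_simp

/-- properties of `h(c) = ∫ (f − c)² 1{f > c} dP` from the proof of Theorem 2
of the paper. For a probability space `(Ω,P)` and measurable `f : Ω → [0,1]`, the function
`h` is nonincreasing and convex on `[0,1]`, `h(0) = P f²`, `h(1) = 0`, and consequently for
`c₁, …, c_n ∈ [0,1]`, `(1/n) Σ h(c_i) ≤ (1 − c̄) P f²` with `c̄ = (1/n) Σ c_i`. -/
theorem stmt7 {Ω : Type*} [MeasurableSpace Ω] (P : Measure Ω) [IsProbabilityMeasure P]
    (f : Ω → ℝ) (hf : Measurable f) (hf01 : ∀ ω, f ω ∈ Set.Icc (0:ℝ) 1) :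
    AntitoneOn (fun c : ℝ => ∫ y, (if c < f y then (f y - c) ^ 2 else 0) ∂P) (Set.Icc 0 1) ∧
    ConvexOn ℝ (Set.Icc 0 1) (fun c : ℝ => ∫ y, (if c < f y then (f y - c) ^ 2 else 0) ∂P) ∧
    (∫ y, (if (0:ℝ) < f y then (f y - 0) ^ 2 else 0) ∂P) = ∫ y, (f y) ^ 2 ∂P ∧
    (∫ y, (if (1:ℝ) < f y then (f y - 1) ^ 2 else 0) ∂P) = 0 ∧
    (∀ (n : ℕ), 1 ≤ n → ∀ c : Fin n → ℝ, (∀ i, c i ∈ Set.Icc (0:ℝ) 1) →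
      (1 / (n : ℝ)) * ∑ i, ∫ y, (if c i < f y then (f y - c i) ^ 2 else 0) ∂P ≤
        (1 - (1 / (n : ℝ)) * ∑ i, c i) * ∫ y, (f y) ^ 2 ∂P) := by
  have hint (c : ℝ) := integrable_ite_lt_sub_sq (μ := P) hf (fun ω => (hf01 ω).2) c
  have hconvex := integral_convexOn_of_integrand_ae (convex_Icc (0 : ℝ) 1)
    (ae_of_all P fun y => (convexOn_ite_lt_sub_sq (f y)).subset (subset_univ _) (convex_Icc 0 1))
    (fun c _ => hint c)
  have hzero : (∫ y, (if (0:ℝ) < f y then (f y - 0) ^ 2 else 0) ∂P) = ∫ y, (f y) ^ 2 ∂P := by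
    refine integral_congr_ae (ae_of_all P fun y => ?_)
    rcases (hf01 y).1.lt_or_eq with hpos | hzero
    · simp [hpos]
    · simp [← hzero]
  have hone : (∫ y, (if (1:ℝ) < f y then (f y - 1) ^ 2 else 0) ∂P) = 0 := by
    simp [not_lt.mpr (hf01 _).2]
  refine ⟨integral_antitoneOn_of_integrand_ae
    (ae_of_all P fun y => (antitone_ite_lt_sub_sq (f y)).antitoneOn _) (fun c _ => hint c),
    hconvex, hzero, hone, fun n hn c hc => ?_⟩
  have : Nonempty (Fin n) := ⟨⟨0, hn⟩⟩
  have hmean := mean_le_one_sub_mean_mul fun i => by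
    simpa only [hzero, hone, mul_zero, add_zero] using hconvex.apply_le_one_sub_mul_add_mul (hc i)
  rwa [Fintype.card_fin] at hmean
end

section
/- Assume D(F,1) ≥ 2, D(F,·) is nonincreasing with finite entropy integral, and Pf > 0 for all f ∈ F. Then for every u > 0, Pⁿ( sup_{f∈F} Σ_{i=1}^n (Pf − f(x_i)) / φ(Pf) ≥ u ) ≤ 2 · (Pⁿ ⊗ Pⁿ)( sup_{f∈F} Σ_{i=1}^n (f(y_i) − f(x_i)) / φ(f̄(x,y)) ≥ u − √(2/log 2) ), where f̄(x,y) = (1/(2n)) Σ_{i=1}^n ( f(y_i) + f(x_i) ). -/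
/-!
Symmetrization with a ghost sample `y`, with `c = √(2 / log 2)`. Since `D ≥ 2` on `(0, 1]`,
`φ(p) ≥ √(n p log 2)`, so Chebyshev's inequality with `Var (∑ f(y_j)) ≤ n · Pf` shows that with
probability at least `1/2` the sum `∑ f(y_j)` lies within `c · φ(Pf)` of `n · Pf`. For such `y`,
if `∑ (Pf − f(x_j)) > (s + c) · φ(Pf)` then `f̄(x, y) ≤ Pf`, and monotonicity of `φ` gives
`∑ (f(y_j) − f(x_j)) ≥ s · φ(f̄(x, y))`. Integrating the sections over `x` yields the factor `2`;
as the supremum need not be attained this is done for every `s < u − c` and passed to the limit.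
When `u ≤ c` the bound follows instead from the antisymmetry of the symmetrized statistic under
exchanging `x` and `y`.
-/

open MeasureTheory ProbabilityTheory Real Set
open scoped ENNReal

section MeasureBounds

variable {α β : Type*} [MeasurableSpace α] [MeasurableSpace β]

lemma le_measure_setOf_le_of_forall_lt {ν : Measure β} [IsFiniteMeasure ν] {g : β → ℝ}
    (hg : Measurable g) {r : ℝ≥0∞} {a t : ℝ} (hat : a < t)
    (h : ∀ s ∈ Ioo a t, r ≤ ν {y | s ≤ g y}) : r ≤ ν {y | t ≤ g y} := by
  obtain ⟨s, hs_mono, hs_mem, hs_lim⟩ := exists_seq_strictMono_tendsto' hat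
  have hinter : {y | t ≤ g y} = ⋂ k, {y | s k ≤ g y} := by
    ext y
    simp only [mem_ofPred_eq, mem_iInter]
    exact ⟨fun hy k => (hs_mem k).2.le.trans hy, fun hy => le_of_tendsto' hs_lim hy⟩
  rw [hinter, Antitone.measure_iInter (s := fun k => {y | s k ≤ g y})
    (fun k l hkl y hy => (hs_mono.monotone hkl).trans hy)
    (fun k => (measurableSet_le measurable_const hg).nullMeasurableSet) ⟨0, measure_ne_top _ _⟩]
  exact le_iInf fun k => h _ (hs_mem k)

lemma mul_measure_le_prod_of_le_measure_prodMk {μ : Measure α} {ν : Measure β} [SFinite ν]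
    {E : Set α} {B : Set (α × β)} (hB : MeasurableSet B) {r : ℝ≥0∞}
    (h : ∀ x ∈ E, r ≤ ν (Prod.mk x ⁻¹' B)) : r * μ E ≤ μ.prod ν B :=
  calc r * μ E ≤ r * μ {x | r ≤ ν (Prod.mk x ⁻¹' B)} := by gcongr; exact h
    _ ≤ ∫⁻ x, ν (Prod.mk x ⁻¹' B) ∂μ :=
      mul_meas_ge_le_lintegral₀ (measurable_measure_prodMk_left hB).aemeasurable r
    _ = μ.prod ν B := (Measure.prod_apply hB).symm

lemma one_le_two_mul_prod_of_mem_or_swap_mem {μ : Measure α} [IsProbabilityMeasure μ]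
    {B : Set (α × α)} (hB : MeasurableSet B) (h : ∀ p, p ∈ B ∨ p.swap ∈ B) :
    1 ≤ 2 * μ.prod μ B :=
  calc (1 : ℝ≥0∞) = μ.prod μ (B ∪ Prod.swap ⁻¹' B) := by
        rw [eq_univ_of_forall (s := B ∪ Prod.swap ⁻¹' B) h, measure_univ]
    _ ≤ μ.prod μ B + μ.prod μ (Prod.swap ⁻¹' B) := measure_union_le _ _
    _ = 2 * μ.prod μ B := by
        rw [Measure.measurePreserving_swap.measure_preimage hB.nullMeasurableSet, two_mul]

end MeasureBounds

lemma sum_comp_mem_Icc {Ω : Type*} {n : ℕ} {f : Ω → ℝ} (hf01 : ∀ ω, f ω ∈ Icc 0 1)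
    (x : Fin n → Ω) : ∑ j, f (x j) ∈ Icc 0 (n : ℝ) :=
  ⟨Finset.sum_nonneg fun j _ => (hf01 _).1,
    by simpa using Finset.sum_le_sum fun j (_ : j ∈ Finset.univ) => (hf01 (x j)).2⟩

section Chebyshev

variable {Ω : Type*} [MeasurableSpace Ω] {P : Measure Ω} [IsProbabilityMeasure P]
  {f : Ω → ℝ}

lemma integral_sum_comp_eval (hf : Measurable f) (hf01 : ∀ ω, f ω ∈ Icc 0 1) (n : ℕ) :
    ∫ x, ∑ j, f (x j) ∂Measure.pi (fun _ : Fin n => P) = n * ∫ ω, f ω ∂P := by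
  have hint (j : Fin n) : Integrable (fun x : Fin n → Ω => f (x j)) (Measure.pi fun _ => P) :=
    (memLp_of_bounded (ae_of_all _ fun x : Fin n → Ω => hf01 (x j))
      (hf.comp (measurable_pi_apply j)).aestronglyMeasurable 1).integrable le_rfl
  rw [integral_finsetSum _ fun j _ => hint j]
  simp [integral_comp_eval (μ := fun _ : Fin n => P) hf.aestronglyMeasurable]

lemma variance_sum_comp_eval_le (hf : Measurable f) (hf01 : ∀ ω, f ω ∈ Icc 0 1) (n : ℕ) :
    Var[fun x => ∑ j, f (x j); Measure.pi (fun _ : Fin n => P)] ≤ n * ∫ ω, f ω ∂P := by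
  have hsum : (fun x : Fin n → Ω => ∑ j, f (x j)) = ∑ j : Fin n, fun x => f (x j) := by
    ext x; simp
  have hvar : Var[f; P] ≤ ∫ ω, f ω ∂P := by
    have h := variance_le_sub_mul_sub (ae_of_all P hf01) hf.aemeasurable
    have h0 : 0 ≤ ∫ ω, f ω ∂P := integral_nonneg fun ω => (hf01 ω).1
    nlinarith
  rw [hsum, variance_sum_pi fun _ => memLp_of_bounded (ae_of_all P hf01)
    hf.aestronglyMeasurable 2]
  simpa using mul_le_mul_of_nonneg_left hvar n.cast_nonneg

lemma integral_mem_Icc_of_mem_Icc (hf : Measurable f) (hf01 : ∀ ω, f ω ∈ Icc 0 1) :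
    ∫ ω, f ω ∂P ∈ Icc 0 1 := by
  refine ⟨integral_nonneg fun ω => (hf01 ω).1, ?_⟩
  calc ∫ ω, f ω ∂P ≤ ∫ _, (1 : ℝ) ∂P :=
        integral_mono ((memLp_of_bounded (ae_of_all P hf01) hf.aestronglyMeasurable 1).integrable
          le_rfl) (integrable_const 1) fun ω => (hf01 ω).2
    _ = 1 := by simp

lemma inv_two_le_measure_abs_sum_sub_lt (hf : Measurable f) (hf01 : ∀ ω, f ω ∈ Icc 0 1)
    (n : ℕ) {t : ℝ} (ht : 0 < t) (hnt : 2 * n * ∫ ω, f ω ∂P ≤ t ^ 2) :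
    2⁻¹ ≤ Measure.pi (fun _ : Fin n => P) {x | |∑ j, f (x j) - n * ∫ ω, f ω ∂P| < t} := by
  set ν := Measure.pi fun _ : Fin n => P
  have hX : MemLp (fun x : Fin n → Ω => ∑ j, f (x j)) 2 ν :=
    memLp_of_bounded (ae_of_all _ (sum_comp_mem_Icc hf01))
      (Finset.measurable_sum _ fun j _ => hf.comp (measurable_pi_apply j)).aestronglyMeasurable 2
  have hcheb := meas_ge_le_variance_div_sq hX ht
  rw [integral_sum_comp_eval hf hf01 n] at hcheb
  have hhalf : ν {x | t ≤ |∑ j, f (x j) - n * ∫ ω, f ω ∂P|} ≤ 2⁻¹ := by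
    refine hcheb.trans ?_
    rw [← ENNReal.ofReal_ofNat 2, ← ENNReal.ofReal_inv_of_pos two_pos]
    refine ENNReal.ofReal_le_ofReal ?_
    rw [div_le_iff₀ (by positivity)]
    linarith [variance_sum_comp_eval_le (P := P) hf hf01 n]
  have hcompl : {x : Fin n → Ω | |∑ j, f (x j) - n * ∫ ω, f ω ∂P| < t}
      = {x | t ≤ |∑ j, f (x j) - n * ∫ ω, f ω ∂P|}ᶜ := by
    ext x; simp
  rw [hcompl, prob_compl_eq_one_sub (measurableSet_le measurable_const (by fun_prop)),
    ← ENNReal.one_sub_inv_two]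
  exact tsub_le_tsub_left hhalf 1

end Chebyshev

lemma le_div_of_abs_sub_lt {φ : ℝ → ℝ} (hφ : Monotone φ) (hφpos : ∀ p ∈ Ioc 0 1, 0 < φ p)
    {N m a b s c : ℝ} (hN : 0 < N) (hm : m ≤ 1) (ha : 0 ≤ a) (hs : 0 ≤ s) (hφm : 0 < φ m)
    (hx : (s + c) * φ m < N * m - a) (hy : |b - N * m| < c * φ m) :
    s ≤ (b - a) / φ (1 / (2 * N) * (b + a)) := by
  obtain ⟨hy₁, hy₂⟩ := abs_lt.1 hy
  have hsφ : 0 ≤ s * φ m := mul_nonneg hs hφm.le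
  have hbar_le : 1 / (2 * N) * (b + a) ≤ m := by
    rw [one_div_mul_eq_div, div_le_iff₀ (by positivity)]
    linarith
  have hbar_pos : 0 < 1 / (2 * N) * (b + a) := by
    have : 0 < b + a := by linarith
    positivity
  rw [le_div_iff₀ (hφpos _ ⟨hbar_pos, hbar_le.trans hm⟩)]
  calc s * φ (1 / (2 * N) * (b + a)) ≤ s * φ m := mul_le_mul_of_nonneg_left (hφ hbar_le) hs
    _ ≤ b - a := by linarith

lemma sub_div_le_of_add_le_sq {N c t a b : ℝ} (hc : 0 ≤ c) (ht : 0 ≤ t) (ha : 0 ≤ a)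
    (hb : 0 ≤ b) (hN : b + a ≤ 2 * N) (hct : b + a ≤ (c * t) ^ 2) :
    (b - a) / t ≤ c * (2 * N + 1) := by
  rcases ht.eq_or_lt with rfl | ht
  · rw [div_zero]
    exact mul_nonneg hc (by linarith)
  rw [div_le_iff₀ ht]
  have hct0 : 0 ≤ c * t := mul_nonneg hc ht.le
  rcases le_total 1 (c * t) with h | h
  · nlinarith
  · nlinarith [mul_le_mul_of_nonneg_left h hct0]

section Symmetrization

variable {Ω : Type*} {n : ℕ}

noncomputable def normalizedDeviation [MeasurableSpace Ω] (P : Measure Ω) (φ : ℝ → ℝ)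
    (f : Ω → ℝ) (x : Fin n → Ω) : ℝ :=
  (∑ j, ((∫ ω, f ω ∂P) - f (x j))) / φ (∫ ω, f ω ∂P)

noncomputable def symmetrizedDeviation (φ : ℝ → ℝ) (f : Ω → ℝ) (x y : Fin n → Ω) : ℝ :=
  (∑ j, (f (y j) - f (x j))) / φ (1 / (2 * n) * ∑ j, (f (y j) + f (x j)))

lemma symmetrizedDeviation_swap (φ : ℝ → ℝ) (f : Ω → ℝ) (x y : Fin n → Ω) :
    symmetrizedDeviation φ f y x = -symmetrizedDeviation φ f x y := by
  simp only [symmetrizedDeviation, ← neg_div, ← Finset.sum_neg_distrib, neg_sub, add_comm]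

lemma measurable_symmetrizedDeviation [MeasurableSpace Ω] {φ : ℝ → ℝ} (hφ : Measurable φ)
    {f : Ω → ℝ} (hf : Measurable f) :
    Measurable fun p : (Fin n → Ω) × (Fin n → Ω) => symmetrizedDeviation φ f p.1 p.2 := by
  unfold symmetrizedDeviation
  fun_prop

lemma symmetrizedDeviation_le (hn : 0 < n) {φ : ℝ → ℝ} (hφ0 : ∀ p, 0 ≤ φ p) {c : ℝ}
    (hc : 0 ≤ c) (hφc : ∀ p ∈ Icc 0 1, 2 * n * p ≤ (c * φ p) ^ 2) {f : Ω → ℝ}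
    (hf01 : ∀ ω, f ω ∈ Icc 0 1) (x y : Fin n → Ω) :
    symmetrizedDeviation φ f x y ≤ c * (2 * n + 1) := by
  obtain ⟨ha₀, ha₁⟩ := sum_comp_mem_Icc hf01 x
  obtain ⟨hb₀, hb₁⟩ := sum_comp_mem_Icc hf01 y
  have hn' : (0 : ℝ) < n := Nat.cast_pos.2 hn
  have hbar : 1 / (2 * n) * (∑ j, f (y j) + ∑ j, f (x j)) ∈ Icc 0 1 := by
    rw [one_div_mul_eq_div]
    exact ⟨by positivity, (div_le_one (by positivity)).2 (by linarith)⟩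
  have h := hφc _ hbar
  rw [← mul_assoc, mul_one_div_cancel (by positivity), one_mul] at h
  unfold symmetrizedDeviation
  rw [Finset.sum_sub_distrib, Finset.sum_add_distrib]
  exact sub_div_le_of_add_le_sq hc (hφ0 _) ha₀ hb₀ (by linarith) h

lemma le_symmetrizedDeviation (hn : 0 < n) {φ : ℝ → ℝ} (hφ : Monotone φ)
    (hφpos : ∀ p ∈ Ioc 0 1, 0 < φ p) [MeasurableSpace Ω] {P : Measure Ω} {f : Ω → ℝ}
    (hf01 : ∀ ω, f ω ∈ Icc 0 1) (hm : ∫ ω, f ω ∂P ≤ 1) (hφm : 0 < φ (∫ ω, f ω ∂P)) {s c : ℝ} (hs : 0 ≤ s)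
    {x y : Fin n → Ω} (hx : s + c < normalizedDeviation P φ f x)
    (hy : |∑ j, f (y j) - n * ∫ ω, f ω ∂P| < c * φ (∫ ω, f ω ∂P)) :
    s ≤ symmetrizedDeviation φ f x y := by
  rw [normalizedDeviation, lt_div_iff₀ hφm, Finset.sum_sub_distrib, Finset.sum_const,
    Finset.card_univ, Fintype.card_fin, nsmul_eq_mul] at hx
  rw [symmetrizedDeviation, Finset.sum_sub_distrib, Finset.sum_add_distrib]
  exact le_div_of_abs_sub_lt hφ hφpos (Nat.cast_pos.2 hn) hm (sum_comp_mem_Icc hf01 x).1 hs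
    hφm hx hy

end Symmetrization

lemma one_le_two_mul_prod_setOf_le_iSup {α ι : Type*} [MeasurableSpace α] {μ : Measure α}
    [IsProbabilityMeasure μ] {Z : ι → α × α → ℝ} (hZ : Measurable fun p => ⨆ i, Z i p)
    (hbdd : ∀ p, BddAbove (range fun i => Z i p)) (hswap : ∀ i p, Z i p.swap = -Z i p)
    {t : ℝ} (ht : t ≤ 0) : 1 ≤ 2 * μ.prod μ {p | t ≤ ⨆ i, Z i p} := by
  refine one_le_two_mul_prod_of_mem_or_swap_mem (measurableSet_le measurable_const hZ)
    fun p => ?_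
  rcases isEmpty_or_nonempty ι with hι | ⟨⟨i⟩⟩
  · left
    simpa [Real.iSup_of_isEmpty] using ht
  rcases le_total 0 (Z i p) with h | h
  · exact .inl (ht.trans (h.trans (le_ciSup (hbdd p) i)))
  · refine .inr (ht.trans ((neg_nonneg.2 h).trans ?_))
    exact (hswap i p).symm.le.trans (le_ciSup (hbdd p.swap) i)

section LargeDeviation

variable {Ω ι : Type*} [MeasurableSpace Ω] {P : Measure Ω} [IsProbabilityMeasure P]
  [Countable ι] {F : ι → Ω → ℝ} {n : ℕ} {φ : ℝ → ℝ} {c : ℝ}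

lemma inv_two_le_measure_setOf_le_iSup_symmetrizedDeviation (hmeas : ∀ i, Measurable (F i))
    (hrange : ∀ i ω, F i ω ∈ Icc 0 1) (hn : 0 < n) (hφ : Monotone φ) (hφ0 : ∀ p, 0 ≤ φ p)
    (hφpos : ∀ p ∈ Ioc 0 1, 0 < φ p) (hc : 0 < c)
    (hφc : ∀ p ∈ Icc 0 1, 2 * n * p ≤ (c * φ p) ^ 2)
    (hbdd : ∀ x y : Fin n → Ω, BddAbove (range fun i => symmetrizedDeviation φ (F i) x y))
    {u : ℝ} (hcu : c < u) {x : Fin n → Ω} (hx : u ≤ ⨆ i, normalizedDeviation P φ (F i) x) :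
    2⁻¹ ≤ Measure.pi (fun _ : Fin n => P)
      {y | u - c ≤ ⨆ i, symmetrizedDeviation φ (F i) x y} := by
  have : Nonempty ι := by
    by_contra hι
    rw [not_nonempty_iff] at hι
    rw [Real.iSup_of_isEmpty] at hx
    linarith
  refine le_measure_setOf_le_of_forall_lt (Measurable.iSup fun i =>
    (measurable_symmetrizedDeviation hφ.measurable (hmeas i)).comp measurable_prodMk_left)
    (sub_pos.2 hcu) fun s hs => ?_
  obtain ⟨i, hi⟩ := exists_lt_of_lt_ciSup (show s + c < ⨆ i, normalizedDeviation P φ (F i) x by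
    linarith [hs.2])
  obtain ⟨hm₀, hm₁⟩ := integral_mem_Icc_of_mem_Icc (P := P) (hmeas i) (hrange i)
  -- since `x / 0 = 0`, an index with a positive normalized deviation has `φ (P f) ≠ 0`
  have hφm : 0 < φ (∫ ω, F i ω ∂P) := (hφ0 _).lt_of_ne fun h => by
    rw [normalizedDeviation, ← h, div_zero] at hi
    linarith [hs.1]
  calc (2⁻¹ : ℝ≥0∞)
      ≤ Measure.pi (fun _ : Fin n => P)
          {y | |∑ j, F i (y j) - n * ∫ ω, F i ω ∂P| < c * φ (∫ ω, F i ω ∂P)} :=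
        inv_two_le_measure_abs_sum_sub_lt (hmeas i) (hrange i) n (mul_pos hc hφm)
          (hφc _ ⟨hm₀, hm₁⟩)
    _ ≤ _ := measure_mono fun y hy =>
        (le_symmetrizedDeviation hn hφ hφpos (hrange i) hm₁ hφm hs.1.le hi hy).trans
          (le_ciSup (hbdd x y) i)

end LargeDeviation

theorem measure_le_two_mul_prod_symmetrizedDeviation {Ω ι : Type*} [MeasurableSpace Ω]
    (P : Measure Ω) [IsProbabilityMeasure P] [Countable ι] (F : ι → Ω → ℝ)
    (hmeas : ∀ i, Measurable (F i)) (hrange : ∀ i ω, F i ω ∈ Icc 0 1) {n : ℕ} (hn : 0 < n)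
    {φ : ℝ → ℝ} (hφ : Monotone φ) (hφ0 : ∀ p, 0 ≤ φ p) {c : ℝ} (hc : 0 < c)
    (hφc : ∀ p ∈ Icc 0 1, 2 * n * p ≤ (c * φ p) ^ 2) (u : ℝ) :
    Measure.pi (fun _ : Fin n => P) {x | u ≤ ⨆ i, normalizedDeviation P φ (F i) x} ≤
      2 * (Measure.pi fun _ : Fin n => P).prod (Measure.pi fun _ : Fin n => P)
        {p | u - c ≤ ⨆ i, symmetrizedDeviation φ (F i) p.1 p.2} := by
  have hbdd (x y : Fin n → Ω) : BddAbove (range fun i => symmetrizedDeviation φ (F i) x y) :=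
    ⟨c * (2 * n + 1), by
      rintro _ ⟨i, rfl⟩
      exact symmetrizedDeviation_le hn hφ0 hc.le hφc (hrange i) x y⟩
  have hZ : Measurable fun p : (Fin n → Ω) × (Fin n → Ω) =>
      ⨆ i, symmetrizedDeviation φ (F i) p.1 p.2 :=
    Measurable.iSup fun i => measurable_symmetrizedDeviation hφ.measurable (hmeas i)
  rcases le_or_gt u c with huc | hcu
  · exact prob_le_one.trans (one_le_two_mul_prod_setOf_le_iSup hZ (fun p => hbdd p.1 p.2)
      (fun i p => symmetrizedDeviation_swap φ (F i) p.1 p.2) (sub_nonpos.2 huc))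
  have hφpos (p : ℝ) (hp : p ∈ Ioc 0 1) : 0 < φ p := (hφ0 p).lt_of_ne fun h => by
    have := hφc p (Ioc_subset_Icc_self hp)
    rw [← h, mul_zero, sq, mul_zero] at this
    have : (0 : ℝ) < 2 * n * p := by have := hp.1; positivity
    linarith
  rw [← ENNReal.inv_mul_le_iff two_ne_zero ENNReal.ofNat_ne_top]
  exact mul_measure_le_prod_of_le_measure_prodMk (measurableSet_le measurable_const hZ)
    fun x hx => inv_two_le_measure_setOf_le_iSup_symmetrizedDeviation hmeas hrange hn hφ hφ0
      hφpos hc hφc hbdd hcu hx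

noncomputable def entropyPhi (D : ℝ → ℝ) (n : ℕ) (p : ℝ) : ℝ :=
  √n * ∫ v in (0 : ℝ)..√p, √(log (D v))

section EntropyPhi

variable {D : ℝ → ℝ}

lemma entropyPhi_nonneg (n : ℕ) (p : ℝ) : 0 ≤ entropyPhi D n p :=
  mul_nonneg (sqrt_nonneg _)
    (intervalIntegral.integral_nonneg (sqrt_nonneg _) fun _ _ => sqrt_nonneg _)

lemma monotone_entropyPhi (hint : IntegrableOn (fun v => √(log (D v))) (Ioi 0)) (n : ℕ) :
    Monotone (entropyPhi D n) := fun p q hpq =>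
  mul_le_mul_of_nonneg_left (intervalIntegral.integral_mono_interval le_rfl (sqrt_nonneg p)
    (sqrt_le_sqrt hpq) (ae_of_all _ fun _ => sqrt_nonneg _)
    ((intervalIntegrable_iff_integrableOn_Ioc_of_le (sqrt_nonneg q)).2
      (hint.mono_set Ioc_subset_Ioi_self))) (sqrt_nonneg _)

lemma mul_sqrt_log_two_le_integral (hmono : AntitoneOn D (Ioi 0)) (hD2 : 2 ≤ D 1)
    (hint : IntegrableOn (fun v => √(log (D v))) (Ioi 0)) {t : ℝ} (ht : t ∈ Icc 0 1) :
    t * √(log 2) ≤ ∫ v in (0 : ℝ)..t, √(log (D v)) :=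
  calc t * √(log 2) = ∫ _ in (0 : ℝ)..t, √(log 2) := by simp
    _ ≤ _ := intervalIntegral.integral_mono_on_of_le_Ioo ht.1 intervalIntegrable_const
        ((intervalIntegrable_iff_integrableOn_Ioc_of_le ht.1).2
          (hint.mono_set Ioc_subset_Ioi_self)) fun v hv => sqrt_le_sqrt <|
        log_le_log two_pos (hD2.trans (hmono hv.1 (mem_Ioi.2 one_pos) (hv.2.le.trans ht.2)))

lemma two_mul_le_sq_entropyPhi (hmono : AntitoneOn D (Ioi 0)) (hD2 : 2 ≤ D 1)
    (hint : IntegrableOn (fun v => √(log (D v))) (Ioi 0)) (n : ℕ) :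
    ∀ p ∈ Icc 0 1, 2 * n * p ≤ (√(2 / log 2) * entropyPhi D n p) ^ 2 := by
  intro p hp
  have hlog : 0 < log 2 := log_pos one_lt_two
  have hint_lb := mul_sqrt_log_two_le_integral hmono hD2 hint
    ⟨sqrt_nonneg p, sqrt_le_one.2 hp.2⟩
  have hsq : n * p * log 2 ≤ entropyPhi D n p ^ 2 :=
    calc n * p * log 2 = (√n * (√p * √(log 2))) ^ 2 := by
          rw [mul_pow, mul_pow, sq_sqrt n.cast_nonneg, sq_sqrt hp.1, sq_sqrt hlog.le, mul_assoc]
      _ ≤ entropyPhi D n p ^ 2 := pow_le_pow_left₀ (by positivity)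
          (mul_le_mul_of_nonneg_left hint_lb (sqrt_nonneg _)) 2
  rw [mul_pow, sq_sqrt (by positivity)]
  calc 2 * n * p = 2 / log 2 * (n * p * log 2) := by field_simp
    _ ≤ 2 / log 2 * entropyPhi D n p ^ 2 := by gcongr

end EntropyPhi

theorem stmt12_general {Ω : Type*} [MeasurableSpace Ω] (P : Measure Ω) [IsProbabilityMeasure P]
    {ι : Type*} [Countable ι] (F : ι → Ω → ℝ)
    (hmeas : ∀ i, Measurable (F i)) (hrange : ∀ i ω, F i ω ∈ Set.Icc (0:ℝ) 1)
    (D : ℝ → ℝ) (hmono : AntitoneOn D (Set.Ioi 0))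
    (hD2 : 2 ≤ D 1)
    (hint : IntegrableOn (fun v => Real.sqrt (Real.log (D v))) (Set.Ioi 0))
    (n : ℕ) (hn : 1 ≤ n) (u : ℝ) :
    Measure.pi (fun _ : Fin n => P)
      {x | u ≤ ⨆ i, (∑ j : Fin n, ((∫ ω, F i ω ∂P) - F i (x j))) /
        (Real.sqrt n *
          ∫ v in (0:ℝ)..Real.sqrt (∫ ω, F i ω ∂P), Real.sqrt (Real.log (D v)))} ≤
      2 * (Measure.prod (Measure.pi fun _ : Fin n => P) (Measure.pi fun _ : Fin n => P))
        {p | u - Real.sqrt (2 / Real.log 2) ≤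
          ⨆ i, (∑ j : Fin n, (F i (p.2 j) - F i (p.1 j))) /
            (Real.sqrt n *
              ∫ v in (0:ℝ)..Real.sqrt ((1 / (2 * (n : ℝ))) *
                  ∑ j : Fin n, (F i (p.2 j) + F i (p.1 j))),
                Real.sqrt (Real.log (D v)))} :=
  measure_le_two_mul_prod_symmetrizedDeviation P F hmeas hrange hn (monotone_entropyPhi hint n)
    (entropyPhi_nonneg n) (sqrt_pos.2 (div_pos two_pos (log_pos one_lt_two)))
    (two_mul_le_sq_entropyPhi hmono hD2 hint n) u

/-- the symmetrization inequality (11) in the proof of Theorem 3 of the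
paper. With `φ(p) = √n ∫₀^{√p} √(log D(v)) dv`, `D(F,1) ≥ 2`, `D` nonincreasing with finite
entropy integral bounding the packing numbers over finitely supported probability measures,
and `P F_i > 0` for all `i`: for every `u > 0`,
`Pⁿ( sup_i Σ_j (P F_i − F_i(x_j)) / φ(P F_i) ≥ u ) ≤
  2 (Pⁿ ⊗ Pⁿ)( sup_i Σ_j (F_i(y_j) − F_i(x_j)) / φ(f̄_i(x,y)) ≥ u − √(2/log 2) )`,
where `f̄_i(x,y) = (1/(2n)) Σ_j (F_i(y_j) + F_i(x_j))`. -/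
theorem stmt12 {Ω : Type*} [MeasurableSpace Ω] (P : Measure Ω) [IsProbabilityMeasure P]
    {ι : Type*} [Countable ι] (F : ι → Ω → ℝ)
    (hmeas : ∀ i, Measurable (F i)) (hrange : ∀ i ω, F i ω ∈ Set.Icc (0:ℝ) 1)
    (hPf : ∀ i, 0 < ∫ ω, F i ω ∂P)
    (D : ℝ → ℝ) (hmono : AntitoneOn D (Set.Ioi 0)) (hD1 : ∀ v > (0:ℝ), 1 ≤ D v)
    (hD2 : 2 ≤ D 1)
    (hint : IntegrableOn (fun v => Real.sqrt (Real.log (D v))) (Set.Ioi 0))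
    (hpack : ∀ v > (0:ℝ), ∀ (m : ℕ) (q : Fin m → Ω) (w : Fin m → ℝ),
      (∀ k, 0 ≤ w k) → (∑ k, w k) = 1 →
      ∀ S : Finset ι, (∀ i ∈ S, ∀ j ∈ S, i ≠ j →
          v ^ 2 < ∑ k, w k * (F i (q k) - F j (q k)) ^ 2) →
        (S.card : ℝ) ≤ D v)
    (n : ℕ) (hn : 1 ≤ n) (u : ℝ) (hu : 0 < u) :
    Measure.pi (fun _ : Fin n => P)
      {x | u ≤ ⨆ i, (∑ j : Fin n, ((∫ ω, F i ω ∂P) - F i (x j))) /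
        (Real.sqrt n *
          ∫ v in (0:ℝ)..Real.sqrt (∫ ω, F i ω ∂P), Real.sqrt (Real.log (D v)))} ≤
      2 * (Measure.prod (Measure.pi fun _ : Fin n => P) (Measure.pi fun _ : Fin n => P))
        {p | u - Real.sqrt (2 / Real.log 2) ≤
          ⨆ i, (∑ j : Fin n, (F i (p.2 j) - F i (p.1 j))) /
            (Real.sqrt n *
              ∫ v in (0:ℝ)..Real.sqrt ((1 / (2 * (n : ℝ))) *
                  ∑ j : Fin n, (F i (p.2 j) + F i (p.1 j))),
                Real.sqrt (Real.log (D v)))} :=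
  stmt12_general P F hmeas hrange D hmono hD2 hint n hn u
end
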